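/- Let l : V → V be differentiable, null for η (η(l x, l x) = 0) and flat-geodesic (fderiv l x (l x) = φ x • l x for a scalar field φ). Let μ : V → ℝ and v : V → (V → ℝ) be differentiable, let γ ∈ ℝ, and let g be the perturbed metric g x = (1 + γ·μ x) • η + γ • (l⁰ x ⊗ v x + v x ⊗ l⁰ x). Set F x = 1 + γ·(μ x + v x (l x)). Then the Lie derivative along l of the covector field x ↦ g x (l x, ·) satisfies (L_l (g♭ l)) x (w) = (fderiv F x (l x) + F x · φ x) · η(l x, w) for all x, w. In particular, wherever F x ≠ 0, (L_l (g♭ l)) x = ψ x • (g x (l x, ·)) with ψ x = φ x + (fderiv F x (l x)) / F x, which expresses that l is geodesic with respect to g. -/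

import Mathlib

/-- The Lie derivative of a (differentiable) covector field `ω : V → (V → ℝ)` along the
vector field `l : V → V`: `(L_l ω) x w = (fderiv ω x (l x)) w + ω x (fderiv l x w)`. -/
noncomputable def lieCov {V : Type*} [NormedAddCommGroup V] [NormedSpace ℝ V]
    (l : V → V) (ω : V → (V →L[ℝ] ℝ)) (x w : V) : ℝ :=
  fderiv ℝ ω x (l x) w + ω x (fderiv ℝ l x w)

/-!
Because `l` is `η`-null, `g x (l x, ·) = F x • l⁰ x`, so by the Leibniz rule
`L_l (g♭ l) = dF(l) • l⁰ + F • L_l l⁰`. Moreover `L_l l⁰ = φ • l⁰`: the term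
`η (fderiv l x (l x), ·)` is `φ x • l⁰ x` by the flat geodesic equation, and
`η (l x, fderiv l x w)` vanishes, being half the derivative of the constant `η (l ·, l ·) = 0`.
-/

section LieDerivative

variable {V : Type*} [NormedAddCommGroup V] [NormedSpace ℝ V]

theorem fderiv_continuousLinearMap_comp {W : Type*} [NormedAddCommGroup W] [NormedSpace ℝ W]
    (η : V →L[ℝ] W) {l : V → V} {x : V} (hl : DifferentiableAt ℝ l x) :
    fderiv ℝ (fun y => η (l y)) x = η.comp (fderiv ℝ l x) :=
  (η.hasFDerivAt.comp x hl.hasFDerivAt).fderiv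

theorem lieCov_smul {l : V → V} {f : V → ℝ} {ω : V → V →L[ℝ] ℝ} {x : V}
    (hf : DifferentiableAt ℝ f x) (hω : DifferentiableAt ℝ ω x) (w : V) :
    lieCov l (fun y => f y • ω y) x w
      = fderiv ℝ f x (l x) * ω x w + f x * lieCov l ω x w := by
  simp only [lieCov, fderiv_fun_smul hf hω, _root_.add_apply,
    _root_.smul_apply, ContinuousLinearMap.smulRight_apply, smul_eq_mul]
  ring

theorem lieCov_comp_apply (η : V →L[ℝ] V →L[ℝ] ℝ) {l : V → V} {x : V}
    (hl : DifferentiableAt ℝ l x) (w : V) :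
    lieCov l (fun y => η (l y)) x w = η (fderiv ℝ l x (l x)) w + η (l x) (fderiv ℝ l x w) := by
  rw [lieCov, fderiv_continuousLinearMap_comp η hl]
  rfl

theorem apply_fderiv_eq_zero_of_isNull {η : V →L[ℝ] V →L[ℝ] ℝ} (hη : ∀ u w, η u w = η w u)
    {l : V → V} (hnull : ∀ y, η (l y) (l y) = 0) {x : V} (hl : DifferentiableAt ℝ l x)
    (w : V) : η (l x) (fderiv ℝ l x w) = 0 := by
  have hderiv : fderiv ℝ (fun y => η (l y) (l y)) x w
      = η (l x) (fderiv ℝ l x w) + η (fderiv ℝ l x w) (l x) := by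
    rw [fderiv_clm_apply (c := fun y => η (l y)) (η.differentiableAt.comp x hl) hl,
      fderiv_continuousLinearMap_comp η hl]
    rfl
  have hconst : fderiv ℝ (fun y => η (l y) (l y)) x w = 0 := by
    simp only [hnull, fderiv_const_apply, _root_.zero_apply]
  rw [hη (fderiv ℝ l x w)] at hderiv
  linarith

theorem lieCov_comp_of_isNull_of_geodesic {η : V →L[ℝ] V →L[ℝ] ℝ}
    (hη : ∀ u w, η u w = η w u) {l : V → V} (hl : Differentiable ℝ l)
    (hnull : ∀ y, η (l y) (l y) = 0) {φ : V → ℝ} (hgeo : ∀ y, fderiv ℝ l y (l y) = φ y • l y)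
    (x w : V) : lieCov l (fun y => η (l y)) x w = φ x * η (l x) w := by
  rw [lieCov_comp_apply η (hl x), apply_fderiv_eq_zero_of_isNull hη hnull (hl x), hgeo,
    map_smul, _root_.smul_apply, smul_eq_mul, add_zero]

end LieDerivative

theorem geodesic_character_preserved_general
    {V : Type*} [NormedAddCommGroup V] [NormedSpace ℝ V]
    (η : V →L[ℝ] V →L[ℝ] ℝ) (hη : ∀ u w : V, η u w = η w u)
    (l : V → V) (hl : Differentiable ℝ l)
    (hnull : ∀ x, η (l x) (l x) = 0)
    (φ : V → ℝ) (hgeo : ∀ x, fderiv ℝ l x (l x) = φ x • l x)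
    (μ : V → ℝ) (hμ : Differentiable ℝ μ)
    (v : V → (V →L[ℝ] ℝ)) (hv : Differentiable ℝ v)
    (γ : ℝ)
    (g : V → (V →L[ℝ] V →L[ℝ] ℝ))
    (hg : ∀ x u w, g x u w
      = (1 + γ * μ x) * η u w + γ * (η (l x) u * v x w + η (l x) w * v x u))
    (F : V → ℝ) (hF : ∀ x, F x = 1 + γ * (μ x + v x (l x))) :
    (∀ x w, lieCov l (fun y => g y (l y)) x w
        = (fderiv ℝ F x (l x) + F x * φ x) * η (l x) w) ∧
    (∀ x, F x ≠ 0 → ∀ w, lieCov l (fun y => g y (l y)) x w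
        = (φ x + fderiv ℝ F x (l x) / F x) * g x (l x) w) := by
  have hlower : ∀ y, g y (l y) = F y • η (l y) := fun y => by
    ext w
    rw [_root_.smul_apply, smul_eq_mul, hg, hF, hnull]
    ring
  have hFdiff : Differentiable ℝ F := by
    rw [funext hF]
    exact (differentiable_const _).add ((hμ.add (hv.clm_apply hl)).const_mul γ)
  have hlie : ∀ x w, lieCov l (fun y => g y (l y)) x w
      = (fderiv ℝ F x (l x) + F x * φ x) * η (l x) w := fun x w => by
    rw [funext hlower,
      lieCov_smul (ω := fun y => η (l y)) (hFdiff x) (η.differentiable.comp hl x),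
      lieCov_comp_of_isNull_of_geodesic hη hl hnull hgeo]
    ring
  refine ⟨hlie, fun x hFx w => ?_⟩
  rw [hlie, hlower, _root_.smul_apply, smul_eq_mul]
  field_simp
  ring

/-- For the perturbed metric
`g x = (1 + γ·μ x) • η + γ • (l⁰ x ⊗ v x + v x ⊗ l⁰ x)` built from a flat-null,
flat-geodesic vector field `l`, setting `F x = 1 + γ·(μ x + v x (l x))`, the Lie derivative
along `l` of the covector field `x ↦ g x (l x, ·)` satisfies
`(L_l (g♭ l)) x w = (fderiv F x (l x) + F x · φ x) · η (l x) w`.  In particular, wherever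
`F x ≠ 0`, `(L_l (g♭ l)) x = ψ x • (g x (l x, ·))` with
`ψ x = φ x + (fderiv F x (l x)) / F x`, which expresses that `l` is geodesic with respect
to `g`. -/
theorem geodesic_character_preserved
    {V : Type*} [NormedAddCommGroup V] [NormedSpace ℝ V] [FiniteDimensional ℝ V]
    (η : V →L[ℝ] V →L[ℝ] ℝ) (hη : ∀ u w : V, η u w = η w u)
    (l : V → V) (hl : Differentiable ℝ l)
    (hnull : ∀ x, η (l x) (l x) = 0)
    (φ : V → ℝ) (hgeo : ∀ x, fderiv ℝ l x (l x) = φ x • l x)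
    (μ : V → ℝ) (hμ : Differentiable ℝ μ)
    (v : V → (V →L[ℝ] ℝ)) (hv : Differentiable ℝ v)
    (γ : ℝ)
    (g : V → (V →L[ℝ] V →L[ℝ] ℝ))
    (hg : ∀ x u w, g x u w
      = (1 + γ * μ x) * η u w + γ * (η (l x) u * v x w + η (l x) w * v x u))
    (F : V → ℝ) (hF : ∀ x, F x = 1 + γ * (μ x + v x (l x))) :
    (∀ x w, lieCov l (fun y => g y (l y)) x w
        = (fderiv ℝ F x (l x) + F x * φ x) * η (l x) w) ∧
    (∀ x, F x ≠ 0 → ∀ w, lieCov l (fun y => g y (l y)) x w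
        = (φ x + fderiv ℝ F x (l x) / F x) * g x (l x) w) :=
  geodesic_character_preserved_general η hη l hl hnull φ hgeo μ hμ v hv γ g hg F hF
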